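/- arXiv:1510.05014 — 2 statements merged into one kernel-verified Lean document; each statement's English description precedes it below -/
import Mathlib

section
/- Let {X_t} be a stationary process with autocovariance function γ satisfying |γ(t)| ≤ γ(0) c e^{−ρt}, with ρ > log(2c+1) if γ takes negative values. Let V² ∈ R^{n×n} be the covariance matrix of the partial sums S_t = ∑_{i=1}^t X_i, i.e., (V²)_{t,s} = Cov(S_t, S_s). Then ||V||_F² ∼ n² and ||V²||_F ∼ n², so the ratio ||V²||_F / ||V||_F² does not converge to zero. -/
/-!
Write `V²_{t,s} = ∑_{i ≤ t} r_s(i)` with row sums `r_s(i) = ∑_{j ≤ s} γ(i - j)`. With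
`q = e^{-ρ}`, exponential decay gives `∑_{k ≠ 0} |γ k| ≤ B := γ(0) c · 2q/(1-q)`, so
`|V²_{t,s}| ≤ (γ(0) + B) t` and both norms are `O(n²)`. Conversely every row sum with `1 ≤ i ≤ s`
is at least some `δ > 0`: `γ(0)` when `γ ≥ 0`, and `γ(0) - B` otherwise, which is positive exactly
because `ρ > log(2c+1)`. Hence `V²_{t,s} ≥ δ min(t,s)`, which gives `trace V² ≥ δ n²/2` and,
as `min(t,s) ≥ ts/n` on `[1,n]²`, `‖V²‖_F² ≥ δ² (∑ t²)² / n² ≥ δ² n⁴ / 9`.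
-/

open Filter Finset

lemma hasSum_pow_natAbs {q : ℝ} (hq0 : 0 ≤ q) (hq1 : q < 1) :
    HasSum (fun k : ℤ => q ^ k.natAbs) ((1 + q) / (1 - q)) := by
  have hpos : HasSum (fun n : ℕ => q ^ ((n : ℤ).natAbs)) (1 - q)⁻¹ := by
    simpa only [Int.natAbs_natCast] using hasSum_geometric_of_lt_one hq0 hq1
  have hneg : HasSum (fun n : ℕ => q ^ (-((n : ℤ) + 1)).natAbs) (q * (1 - q)⁻¹) := by
    have hnat : ∀ n : ℕ, (-((n : ℤ) + 1)).natAbs = n + 1 := fun n => by omega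
    simpa only [hnat, pow_succ'] using (hasSum_geometric_of_lt_one hq0 hq1).mul_left q
  have := HasSum.of_nat_of_neg_add_one (f := fun k : ℤ => q ^ k.natAbs) hpos hneg
  rwa [← one_add_mul, ← div_eq_mul_inv] at this

lemma sum_pow_natAbs_le_of_zero_notMem {q : ℝ} (hq0 : 0 ≤ q) (hq1 : q < 1) {T : Finset ℤ}
    (hT : 0 ∉ T) : ∑ k ∈ T, q ^ k.natAbs ≤ 2 * q / (1 - q) := by
  have h := sum_le_hasSum (insert 0 T) (fun k _ => by positivity) (hasSum_pow_natAbs hq0 hq1)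
  rw [sum_insert hT, Int.natAbs_zero, pow_zero] at h
  have h1q : 0 < 1 - q := by linarith
  calc ∑ k ∈ T, q ^ k.natAbs ≤ (1 + q) / (1 - q) - 1 := by linarith
    _ = 2 * q / (1 - q) := by field_simp; ring

noncomputable def partialSumCov (γ : ℤ → ℝ) (t s : ℕ) : ℝ :=
  ∑ i ∈ Icc 1 t, ∑ j ∈ Icc 1 s, γ ((i : ℤ) - (j : ℤ))

section PartialSumCov

variable {γ : ℤ → ℝ}

lemma partialSumCov_comm (hsym : ∀ k, γ (-k) = γ k) (t s : ℕ) :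
    partialSumCov γ t s = partialSumCov γ s t := by
  unfold partialSumCov
  rw [sum_comm]
  refine sum_congr rfl fun j _ => sum_congr rfl fun i _ => ?_
  rw [← hsym, neg_sub]

lemma sum_abs_comp_sub_le {A : ℝ} (hA : ∀ T : Finset ℤ, ∑ k ∈ T, |γ k| ≤ A) (i : ℤ)
    (S : Finset ℕ) : ∑ j ∈ S, |γ (i - j)| ≤ A := by
  rw [← sum_image (f := fun k => |γ k|) (fun x _ y _ h => by simpa using h)]
  exact hA _

lemma abs_partialSumCov_le {A : ℝ} (hA : ∀ T : Finset ℤ, ∑ k ∈ T, |γ k| ≤ A) (t s : ℕ) :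
    |partialSumCov γ t s| ≤ A * t := by
  calc |partialSumCov γ t s|
      ≤ ∑ i ∈ Icc 1 t, ∑ j ∈ Icc 1 s, |γ ((i : ℤ) - (j : ℤ))| :=
        (abs_sum_le_sum_abs _ _).trans (sum_le_sum fun i _ => abs_sum_le_sum_abs _ _)
    _ ≤ ∑ _i ∈ Icc 1 t, A := sum_le_sum fun i _ => sum_abs_comp_sub_le hA i _
    _ = A * t := by simp [mul_comm]

lemma sub_le_sum_comp_sub {B : ℝ} (hB : ∀ T : Finset ℤ, 0 ∉ T → ∑ k ∈ T, |γ k| ≤ B)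
    {i s : ℕ} (hi : i ∈ Icc 1 s) : γ 0 - B ≤ ∑ j ∈ Icc 1 s, γ ((i : ℤ) - (j : ℤ)) := by
  rw [← add_sum_erase _ _ hi, sub_self]
  have hoff : ∑ j ∈ (Icc 1 s).erase i, |γ ((i : ℤ) - (j : ℤ))| ≤ B := by
    rw [← sum_image (f := fun k => |γ k|) (fun x _ y _ h => by simpa using h)]
    refine hB _ fun h0 => ?_
    obtain ⟨j, hj, hij⟩ := mem_image.1 h0
    exact (mem_erase.1 hj).1 (by omega)
  linarith [neg_abs_le (∑ j ∈ (Icc 1 s).erase i, γ ((i : ℤ) - (j : ℤ))),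
    abs_sum_le_sum_abs (fun j : ℕ => γ ((i : ℤ) - (j : ℤ))) ((Icc 1 s).erase i)]

lemma le_sum_comp_sub_of_nonneg (hγ : ∀ k, 0 ≤ γ k) {i s : ℕ} (hi : i ∈ Icc 1 s) :
    γ 0 ≤ ∑ j ∈ Icc 1 s, γ ((i : ℤ) - (j : ℤ)) := by
  simpa using single_le_sum (f := fun j : ℕ => γ ((i : ℤ) - (j : ℤ))) (fun j _ => hγ _) hi

lemma exists_pos_le_sum_comp_sub {B : ℝ} (hγ0 : 0 < γ 0)
    (hB : ∀ T : Finset ℤ, 0 ∉ T → ∑ k ∈ T, |γ k| ≤ B) (hBlt : (∃ k, γ k < 0) → B < γ 0) :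
    ∃ δ > 0, ∀ s : ℕ, ∀ i ∈ Icc 1 s, δ ≤ ∑ j ∈ Icc 1 s, γ ((i : ℤ) - (j : ℤ)) := by
  by_cases hex : ∃ k, γ k < 0
  · exact ⟨γ 0 - B, sub_pos.2 (hBlt hex), fun s i hi => sub_le_sum_comp_sub hB hi⟩
  · push Not at hex
    exact ⟨γ 0, hγ0, fun s i hi => le_sum_comp_sub_of_nonneg hex hi⟩

lemma mul_min_le_partialSumCov (hsym : ∀ k, γ (-k) = γ k) {δ : ℝ}
    (hrow : ∀ s : ℕ, ∀ i ∈ Icc 1 s, δ ≤ ∑ j ∈ Icc 1 s, γ ((i : ℤ) - (j : ℤ))) (t s : ℕ) :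
    δ * (min t s : ℕ) ≤ partialSumCov γ t s := by
  wlog hts : t ≤ s generalizing t s
  · rw [min_comm, partialSumCov_comm hsym]
    exact this s t (le_of_not_ge hts)
  rw [min_eq_left hts]
  have := card_nsmul_le_sum (Icc 1 t) _ δ fun i hi =>
    hrow s i (Icc_subset_Icc_right hts hi)
  simpa [mul_comm, partialSumCov] using this

end PartialSumCov

lemma sum_Icc_one_natCast (n : ℕ) : ∑ t ∈ Icc 1 n, (t : ℝ) = n * (n + 1) / 2 := by
  induction n with
  | zero => simp
  | succ n ih => rw [sum_Icc_succ_top (by omega), ih]; push_cast; ring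

lemma sum_Icc_one_natCast_sq (n : ℕ) :
    ∑ t ∈ Icc 1 n, (t : ℝ) ^ 2 = n * (n + 1) * (2 * n + 1) / 6 := by
  induction n with
  | zero => simp
  | succ n ih => rw [sum_Icc_succ_top (by omega), ih]; push_cast; ring

lemma cube_div_three_le_sum_Icc_one_natCast_sq (n : ℕ) :
    (n : ℝ) ^ 3 / 3 ≤ ∑ t ∈ Icc 1 n, (t : ℝ) ^ 2 := by
  rw [sum_Icc_one_natCast_sq]
  have hn : (0 : ℝ) ≤ n := n.cast_nonneg
  nlinarith [sq_nonneg (n : ℝ)]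

section QuadraticGrowth

variable {v : ℕ → ℕ → ℝ} {A δ : ℝ}

lemma sum_diag_le_mul_sq (hA : ∀ t s, |v t s| ≤ A * t) (n : ℕ) :
    ∑ t ∈ Icc 1 n, v t t ≤ A * n ^ 2 := by
  have hA0 : 0 ≤ A := by simpa using (abs_nonneg _).trans (hA 1 1)
  calc ∑ t ∈ Icc 1 n, v t t ≤ ∑ _t ∈ Icc 1 n, A * n := by
        refine sum_le_sum fun t ht => (le_abs_self _).trans <| (hA t t).trans ?_
        gcongr
        exact_mod_cast (mem_Icc.1 ht).2
    _ = A * n ^ 2 := by simp; ring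

lemma sqrt_sum_sq_le_mul_sq (hA : ∀ t s, |v t s| ≤ A * t) (n : ℕ) :
    √(∑ t ∈ Icc 1 n, ∑ s ∈ Icc 1 n, v t s ^ 2) ≤ A * n ^ 2 := by
  have hA0 : 0 ≤ A := by simpa using (abs_nonneg _).trans (hA 1 1)
  rw [Real.sqrt_le_left (by positivity)]
  calc ∑ t ∈ Icc 1 n, ∑ s ∈ Icc 1 n, v t s ^ 2
      ≤ ∑ _t ∈ Icc 1 n, ∑ _s ∈ Icc 1 n, (A * n) ^ 2 := by
        refine sum_le_sum fun t ht => sum_le_sum fun s _ => ?_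
        rw [← sq_abs]
        gcongr
        refine (hA t s).trans ?_
        gcongr
        exact_mod_cast (mem_Icc.1 ht).2
    _ = (A * n ^ 2) ^ 2 := by simp; ring

lemma mul_sq_le_sum_diag (hδ : 0 ≤ δ) (hv : ∀ t s, δ * (min t s : ℕ) ≤ v t s) (n : ℕ) :
    δ / 2 * n ^ 2 ≤ ∑ t ∈ Icc 1 n, v t t := by
  calc δ / 2 * n ^ 2 ≤ δ * (n * (n + 1) / 2) := by nlinarith [mul_nonneg hδ n.cast_nonneg]
    _ = ∑ t ∈ Icc 1 n, δ * t := by rw [← mul_sum, sum_Icc_one_natCast]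
    _ ≤ ∑ t ∈ Icc 1 n, v t t := sum_le_sum fun t _ => by simpa using hv t t

lemma mul_sq_le_sqrt_sum_sq (hδ : 0 ≤ δ) (hv : ∀ t s, δ * (min t s : ℕ) ≤ v t s) (n : ℕ) :
    δ / 3 * n ^ 2 ≤ √(∑ t ∈ Icc 1 n, ∑ s ∈ Icc 1 n, v t s ^ 2) := by
  rcases n.eq_zero_or_pos with rfl | hn
  · simp
  have hn' : (0 : ℝ) < n := by exact_mod_cast hn
  have hentry : ∀ t ∈ Icc 1 n, ∀ s ∈ Icc 1 n, (δ / n * (t * s)) ^ 2 ≤ v t s ^ 2 := by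
    intro t ht s hs
    have hts : (t : ℝ) * s ≤ n * (min t s : ℕ) := by
      rcases le_total t s with h | h
      · rw [min_eq_left h, mul_comm (n : ℝ)]; gcongr; exact_mod_cast (mem_Icc.1 hs).2
      · rw [min_eq_right h]; gcongr; exact_mod_cast (mem_Icc.1 ht).2
    have : δ / n * (t * s) ≤ δ * (min t s : ℕ) := by
      rw [div_mul_eq_mul_div, div_le_iff₀ hn', mul_assoc, mul_comm _ (n : ℝ)]
      exact mul_le_mul_of_nonneg_left hts hδ
    exact pow_le_pow_left₀ (by positivity) (this.trans (hv t s)) 2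
  rw [Real.le_sqrt (by positivity) (by positivity)]
  calc (δ / 3 * n ^ 2) ^ 2 = (δ / n) ^ 2 * ((n : ℝ) ^ 3 / 3) ^ 2 := by field_simp
    _ ≤ (δ / n) ^ 2 * (∑ t ∈ Icc 1 n, (t : ℝ) ^ 2) ^ 2 := by
        gcongr
        exact cube_div_three_le_sum_Icc_one_natCast_sq n
    _ = ∑ t ∈ Icc 1 n, ∑ s ∈ Icc 1 n, (δ / n * (t * s)) ^ 2 := by
        rw [sq (∑ t ∈ Icc 1 n, (t : ℝ) ^ 2), sum_mul_sum, mul_sum]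
        refine sum_congr rfl fun t _ => ?_
        rw [mul_sum]
        refine sum_congr rfl fun s _ => ?_
        ring
    _ ≤ ∑ t ∈ Icc 1 n, ∑ s ∈ Icc 1 n, v t s ^ 2 :=
        sum_le_sum fun t ht => sum_le_sum fun s hs => hentry t ht s hs

end QuadraticGrowth

lemma abs_le_pow_natAbs_of_decay {γ : ℤ → ℝ} {K ρ : ℝ} (hsym : ∀ k, γ (-k) = γ k)
    (hdecay : ∀ t : ℕ, 1 ≤ t → |γ t| ≤ K * Real.exp (-ρ * t)) {k : ℤ} (hk : k ≠ 0) :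
    |γ k| ≤ K * Real.exp (-ρ) ^ k.natAbs := by
  have hγk : γ k = γ k.natAbs := by
    obtain ⟨m, rfl | rfl⟩ := Int.eq_nat_or_neg k <;> simp [hsym]
  rw [hγk, ← Real.exp_nat_mul, mul_comm (k.natAbs : ℝ)]
  exact hdecay _ (Int.natAbs_pos.2 hk)

section SummableBounds

variable {γ : ℤ → ℝ}

lemma sum_abs_le_of_abs_le_pow {K q : ℝ} (hK : 0 ≤ K) (hq0 : 0 ≤ q) (hq1 : q < 1)
    (hγ : ∀ k : ℤ, k ≠ 0 → |γ k| ≤ K * q ^ k.natAbs) {T : Finset ℤ} (hT : 0 ∉ T) :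
    ∑ k ∈ T, |γ k| ≤ K * (2 * q / (1 - q)) :=
  calc ∑ k ∈ T, |γ k| ≤ ∑ k ∈ T, K * q ^ k.natAbs :=
        sum_le_sum fun k hk => hγ k (ne_of_mem_of_not_mem hk hT)
    _ ≤ K * (2 * q / (1 - q)) := by
        rw [← mul_sum]
        exact mul_le_mul_of_nonneg_left (sum_pow_natAbs_le_of_zero_notMem hq0 hq1 hT) hK

lemma sum_abs_le_abs_zero_add {B : ℝ} (hB : ∀ T : Finset ℤ, 0 ∉ T → ∑ k ∈ T, |γ k| ≤ B)
    (T : Finset ℤ) : ∑ k ∈ T, |γ k| ≤ |γ 0| + B :=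
  calc ∑ k ∈ T, |γ k| ≤ ∑ k ∈ insert 0 (T.erase 0), |γ k| :=
        sum_le_sum_of_subset_of_nonneg (insert_erase_subset 0 T) fun _ _ _ => abs_nonneg _
    _ ≤ |γ 0| + B := by
        rw [sum_insert (notMem_erase 0 T)]
        gcongr
        exact hB _ (notMem_erase 0 T)

end SummableBounds

lemma mul_two_mul_exp_neg_div_lt_one {c ρ : ℝ} (hc : 0 < c) (hρ : Real.log (2 * c + 1) < ρ) :
    c * (2 * Real.exp (-ρ) / (1 - Real.exp (-ρ))) < 1 := by
  set q := Real.exp (-ρ)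
  have hq : q * (2 * c + 1) < 1 := by
    rw [← lt_div_iff₀ (by linarith), one_div, ← Real.exp_log (by linarith : 0 < 2 * c + 1),
      ← Real.exp_neg]
    exact Real.exp_lt_exp.2 (neg_lt_neg hρ)
  rw [← mul_div_assoc, div_lt_one (by nlinarith)]
  linarith

lemma not_tendsto_div_nhds_zero {f g : ℕ → ℝ} {a b : ℝ} (ha : 0 < a)
    (hf : ∀ n, 0 < n → a * n ^ 2 ≤ f n) (hg : ∀ n, 0 < n → a * n ^ 2 ≤ g n ∧ g n ≤ b * n ^ 2) :
    ¬ Tendsto (fun n => f n / g n) atTop (nhds 0) := by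
  have hb : 0 < b := by
    have := (hg 1 one_pos).1.trans (hg 1 one_pos).2
    norm_num at this
    linarith
  have hratio : ∀ᶠ n in atTop, a / b ≤ f n / g n := by
    filter_upwards [eventually_gt_atTop 0] with n hn
    have hn2 : (0 : ℝ) < n ^ 2 := by positivity
    calc a / b = a * n ^ 2 / (b * n ^ 2) := by field_simp
      _ ≤ f n / g n :=
        div_le_div₀ ((mul_pos ha hn2).le.trans (hf n hn)) (hf n hn)
          ((mul_pos ha hn2).trans_le (hg n hn).1) (hg n hn).2
  intro h
  obtain ⟨n, hle, hlt⟩ := (hratio.and (h.eventually (gt_mem_nhds (div_pos ha hb)))).exists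
  exact hlt.not_ge hle

lemma le_div_sq_and_div_sq_le {x a b : ℝ} {n : ℕ} (hn : 0 < n)
    (h : a * n ^ 2 ≤ x ∧ x ≤ b * n ^ 2) : a ≤ x / n ^ 2 ∧ x / n ^ 2 ≤ b := by
  have hn2 : (0 : ℝ) < n ^ 2 := by positivity
  exact ⟨(le_div_iff₀ hn2).2 h.1, (div_le_iff₀ hn2).2 h.2⟩

/-- For the covariance matrix `V²` of the partial sums of a stationary process with
exponentially decaying autocovariance `γ` (with `ρ > log(2c+1)` if `γ` takes negative
values), `‖V‖_F² = trace(V²) ∼ n²` and `‖V²‖_F ∼ n²`, so the ratio `‖V²‖_F/‖V‖_F²`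
does not converge to zero.  Here `(V²)_{t,s} = ∑_{i=1}^t ∑_{j=1}^s γ(i−j)`. -/
theorem integrated_process_frobenius
    (γ : ℤ → ℝ) (c ρ : ℝ) (hc : 0 < c) (hρ : 0 < ρ) (hγ0 : 0 < γ 0)
    (hsym : ∀ t : ℤ, γ (-t) = γ t)
    (hdecay : ∀ t : ℕ, 1 ≤ t → |γ t| ≤ γ 0 * c * Real.exp (-ρ * t))
    (hneg : (∃ t : ℤ, γ t < 0) → Real.log (2 * c + 1) < ρ)
    -- `cov t s = Cov(S_t, S_s)` for the partial sums `S_t = X_1 + ⋯ + X_t`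
    (cov : ℕ → ℕ → ℝ)
    (hcov : ∀ t s : ℕ, cov t s =
      ∑ i ∈ Finset.Icc 1 t, ∑ j ∈ Finset.Icc 1 s, γ ((i : ℤ) - (j : ℤ)))
    -- `tr n = ‖V‖_F² = trace(V²)` and `fr n = ‖V²‖_F` for the `n × n` covariance matrix
    (tr fr : ℕ → ℝ)
    (htr : ∀ n : ℕ, tr n = ∑ t ∈ Finset.Icc 1 n, cov t t)
    (hfr : ∀ n : ℕ, fr n =
      Real.sqrt (∑ t ∈ Finset.Icc 1 n, ∑ s ∈ Finset.Icc 1 n, (cov t s) ^ 2)) :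
    (∃ c₁ c₂ : ℝ, 0 < c₁ ∧ c₁ < c₂ ∧ ∀ᶠ n : ℕ in atTop,
        (c₁ ≤ tr n / (n : ℝ) ^ 2 ∧ tr n / (n : ℝ) ^ 2 ≤ c₂) ∧
        (c₁ ≤ fr n / (n : ℝ) ^ 2 ∧ fr n / (n : ℝ) ^ 2 ≤ c₂)) ∧
    ¬ Tendsto (fun n : ℕ => fr n / tr n) atTop (nhds 0) := by
  set q := Real.exp (-ρ)
  have hq1 : q < 1 := Real.exp_lt_one_iff.2 (neg_neg_of_pos hρ)
  set B := γ 0 * c * (2 * q / (1 - q))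
  have hB : ∀ T : Finset ℤ, 0 ∉ T → ∑ k ∈ T, |γ k| ≤ B := fun T =>
    sum_abs_le_of_abs_le_pow (by positivity) (Real.exp_pos _).le hq1
      (fun k => abs_le_pow_natAbs_of_decay hsym hdecay)
  have hBlt : (∃ t, γ t < 0) → B < γ 0 := fun hex => by
    simpa [B, mul_assoc] using
      mul_lt_mul_of_pos_left (mul_two_mul_exp_neg_div_lt_one hc (hneg hex)) hγ0
  obtain ⟨δ, hδ, hrow⟩ := exists_pos_le_sum_comp_sub hγ0 hB hBlt
  set A := |γ 0| + B
  have hup : ∀ t s, |cov t s| ≤ A * t := fun t s =>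
    hcov t s ▸ abs_partialSumCov_le (sum_abs_le_abs_zero_add hB) t s
  have hlow : ∀ t s, δ * (min t s : ℕ) ≤ cov t s := fun t s =>
    hcov t s ▸ mul_min_le_partialSumCov hsym hrow t s
  have hδA : δ / 3 < A := by
    have := (hlow 1 1).trans ((le_abs_self _).trans (hup 1 1))
    norm_num at this
    linarith
  have htr' : ∀ n, δ / 3 * n ^ 2 ≤ tr n ∧ tr n ≤ A * n ^ 2 := fun n =>
    htr n ▸ ⟨le_trans (by gcongr; norm_num) (mul_sq_le_sum_diag hδ.le hlow n),
      sum_diag_le_mul_sq hup n⟩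
  have hfr' : ∀ n, δ / 3 * n ^ 2 ≤ fr n ∧ fr n ≤ A * n ^ 2 := fun n =>
    hfr n ▸ ⟨mul_sq_le_sqrt_sum_sq hδ.le hlow n, sqrt_sum_sq_le_mul_sq hup n⟩
  refine ⟨⟨δ / 3, A, by positivity, hδA, ?_⟩,
    not_tendsto_div_nhds_zero (by positivity) (fun n _ => (hfr' n).1) (fun n _ => htr' n)⟩
  filter_upwards [eventually_gt_atTop 0] with n hn
  exact ⟨le_div_sq_and_div_sq_le hn (htr' n), le_div_sq_and_div_sq_le hn (hfr' n)⟩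
end

section
/- In the population partial least squares problem under the latent variable model, the maximizer w₁ of the averaged covariance n^{−2} ∑_{t,s=1}^n Cov(y_t, X_s^T w) over unit vectors w ∈ R^k is proportional to Pq and is independent of the temporal covariance matrix V². Specifically, n^{−2} ∑_{t,s} Cov(y_t, X_s^T w) = (n^{−2} ∑_{t,s} (V²)_{t,s}) · (Pq)^T w, so w₁ = Pq/||Pq|| whenever ∑_{t,s}(V²)_{t,s} > 0 and Pq ≠ 0. -/
open MeasureTheory ProbabilityTheory Matrix

/-!
The noise entries of `N`, `F`, `f` are independent, centred and of unit variance, hence an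
orthonormal family in `L²(μ)`. Both `y_t` and `(X w)_s` are linear in this family,
`y_t = α_t ⬝ G` and `(X w)_s = β_s ⬝ G`, so their covariance is the dot product `α_t ⬝ β_s` of
the deterministic coefficient vectors. The only coordinates on which both are nonzero are those
of `N`, and these give `(V Vᵀ)_{ts} (Pq)ᵀ w = (V²)_{ts} (Pq)ᵀ w`. Maximizing the linear form
`w ↦ (Pq)ᵀ w` over unit vectors is then Cauchy–Schwarz.
-/

section OrthonormalFamily

variable {Ω ι : Type*} [MeasurableSpace Ω] {μ : Measure Ω} {g : ι → Ω → ℝ}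

theorem integral_mul_eq_ite_of_iIndepFun [DecidableEq ι]
    (hIndep : iIndepFun g μ) (hmeas : ∀ a, AEStronglyMeasurable (g a) μ)
    (hmean : ∀ a, ∫ ω, g a ω ∂μ = 0) (hvar : ∀ a, ∫ ω, g a ω ^ 2 ∂μ = 1) (a b : ι) :
    ∫ ω, g a ω * g b ω ∂μ = if a = b then 1 else 0 := by
  split_ifs with hab
  · subst hab
    simpa [sq] using hvar a
  · simpa [hmean] using (hIndep.indepFun hab).integral_mul_eq_mul_integral (hmeas a) (hmeas b)

variable [Fintype ι]

theorem integral_dotProduct_eq_zero (hint : ∀ a, Integrable (g a) μ)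
    (hmean : ∀ a, ∫ ω, g a ω ∂μ = 0) (c : ι → ℝ) :
    ∫ ω, c ⬝ᵥ (fun a => g a ω) ∂μ = 0 := by
  simp only [dotProduct]
  rw [integral_finsetSum _ fun a _ => (hint a).const_mul (c a)]
  simp [integral_const_mul, hmean]

theorem integral_dotProduct_mul_dotProduct [DecidableEq ι]
    (hint : ∀ a b, Integrable (fun ω => g a ω * g b ω) μ)
    (horth : ∀ a b, ∫ ω, g a ω * g b ω ∂μ = if a = b then 1 else 0) (c d : ι → ℝ) :
    ∫ ω, (c ⬝ᵥ fun a => g a ω) * (d ⬝ᵥ fun a => g a ω) ∂μ = c ⬝ᵥ d := by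
  have hexpand : ∀ ω, (c ⬝ᵥ fun a => g a ω) * (d ⬝ᵥ fun a => g a ω)
      = ∑ a, ∑ b, c a * d b * (g a ω * g b ω) := by
    intro ω
    simp only [dotProduct, Finset.sum_mul_sum]
    exact Finset.sum_congr rfl fun a _ => Finset.sum_congr rfl fun b _ => by ring
  simp only [hexpand]
  rw [integral_finsetSum _ fun a _ => integrable_finsetSum _ fun b _ => (hint a b).const_mul _]
  simp [integral_finsetSum _ fun b _ => (hint _ b).const_mul _, integral_const_mul, horth,
    dotProduct]

end OrthonormalFamily

theorem dotProduct_le_dotProduct_normalize {ι : Type*} [Fintype ι] (v w : ι → ℝ)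
    (hw : ∑ j, w j ^ 2 = 1) :
    v ⬝ᵥ w ≤ v ⬝ᵥ fun j => v j / √(∑ j', v j' ^ 2) := by
  have hself : v ⬝ᵥ (fun j => v j / √(∑ j', v j' ^ 2)) = √(∑ j, v j ^ 2) := by
    simp only [dotProduct, mul_div_assoc', ← sq, ← Finset.sum_div, Real.div_sqrt]
  rw [hself]
  simpa [hw, dotProduct] using Real.sum_mul_le_sqrt_mul_sqrt Finset.univ v w

section LatentModel

variable {m k l : Type*} [Fintype m] [Fintype k] [Fintype l]

def stackNoise (N : Matrix m l ℝ) (F : Matrix m k ℝ) (f : m → ℝ) : (m × l) ⊕ (m × k) ⊕ m → ℝ :=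
  Sum.elim (fun p => N p.1 p.2) (Sum.elim (fun p => F p.1 p.2) f)

def responseCoeff (V : Matrix m m ℝ) (q : l → ℝ) (η₂ : ℝ) (t : m) :
    (m × l) ⊕ (m × k) ⊕ m → ℝ :=
  Sum.elim (fun p => V t p.1 * q p.2) (Sum.elim 0 fun u => η₂ * V t u)

def predictorCoeff (V : Matrix m m ℝ) (P : Matrix k l ℝ) (η₁ : ℝ) (w : k → ℝ) (s : m) :
    (m × l) ⊕ (m × k) ⊕ m → ℝ :=
  Sum.elim (fun p => V s p.1 * (w ᵥ* P) p.2) (Sum.elim (fun p => η₁ * V s p.1 * w p.2) 0)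

theorem response_apply_eq_dotProduct (V : Matrix m m ℝ) (N : Matrix m l ℝ) (F : Matrix m k ℝ)
    (f : m → ℝ) (q : l → ℝ) (η₂ : ℝ) (t : m) :
    (V *ᵥ (N *ᵥ q + η₂ • f)) t = responseCoeff V q η₂ t ⬝ᵥ stackNoise N F f := by
  simp only [responseCoeff, stackNoise, dotProduct, mulVec, Fintype.sum_sum_type,
    Fintype.sum_prod_type, Sum.elim_inl, Sum.elim_inr, Pi.add_apply, Pi.smul_apply,
    smul_eq_mul, Pi.zero_apply, zero_mul, Finset.sum_const_zero, zero_add, mul_add,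
    Finset.sum_add_distrib, Finset.mul_sum]
  congr 1
  · exact Finset.sum_congr rfl fun u _ => Finset.sum_congr rfl fun i _ => by ring
  · exact Finset.sum_congr rfl fun u _ => by ring

theorem predictor_mulVec_apply_eq_dotProduct (V : Matrix m m ℝ) (N : Matrix m l ℝ) (F : Matrix m k ℝ)
    (f : m → ℝ) (P : Matrix k l ℝ) (η₁ : ℝ) (w : k → ℝ) (s : m) :
    ((V * (N * Pᵀ + η₁ • F)) *ᵥ w) s = predictorCoeff V P η₁ w s ⬝ᵥ stackNoise N F f := by
  rw [← mulVec_mulVec, add_mulVec, ← mulVec_mulVec, smul_mulVec, mulVec_transpose]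
  simp only [predictorCoeff, stackNoise, dotProduct, mulVec, Fintype.sum_sum_type,
    Fintype.sum_prod_type, Sum.elim_inl, Sum.elim_inr, Pi.add_apply, Pi.smul_apply,
    smul_eq_mul, Pi.zero_apply, zero_mul, Finset.sum_const_zero, add_zero, mul_add,
    Finset.sum_add_distrib, Finset.mul_sum]
  congr 1
  · exact Finset.sum_congr rfl fun v _ => Finset.sum_congr rfl fun i _ => by ring
  · exact Finset.sum_congr rfl fun v _ => Finset.sum_congr rfl fun j _ => by ring

theorem responseCoeff_dotProduct_predictorCoeff (V : Matrix m m ℝ) (P : Matrix k l ℝ)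
    (q : l → ℝ) (η₁ η₂ : ℝ) (w : k → ℝ) (t s : m) :
    responseCoeff (k := k) V q η₂ t ⬝ᵥ predictorCoeff V P η₁ w s
      = (V * Vᵀ) t s * ((P *ᵥ q) ⬝ᵥ w) := by
  rw [dotProduct_comm (P *ᵥ q), dotProduct_mulVec]
  simp only [responseCoeff, predictorCoeff, dotProduct, Fintype.sum_sum_type,
    Fintype.sum_prod_type, Sum.elim_inl, Sum.elim_inr, Pi.zero_apply, zero_mul, mul_zero,
    Finset.sum_const_zero, add_zero, mul_apply, transpose_apply, Finset.sum_mul, Finset.mul_sum]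
  rw [Finset.sum_comm]
  exact Finset.sum_congr rfl fun i _ => Finset.sum_congr rfl fun u _ => by ring

end LatentModel

theorem population_pls_first_direction_general
    (n k l : ℕ) (Ω : Type*) [MeasurableSpace Ω] (μ : Measure Ω) [IsProbabilityMeasure μ]
    (V : Matrix (Fin n) (Fin n) ℝ) (hVsymm : V.IsSymm)
    (P : Matrix (Fin k) (Fin l) ℝ) (q : Fin l → ℝ) (η₁ η₂ : ℝ)
    (N : Ω → Matrix (Fin n) (Fin l) ℝ) (F : Ω → Matrix (Fin n) (Fin k) ℝ) (f : Ω → Fin n → ℝ)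
    (g : (Fin n × Fin l) ⊕ (Fin n × Fin k) ⊕ Fin n → Ω → ℝ)
    (hgN : ∀ t i, g (Sum.inl (t, i)) = fun ω => N ω t i)
    (hgF : ∀ t i, g (Sum.inr (Sum.inl (t, i))) = fun ω => F ω t i)
    (hgf : ∀ t, g (Sum.inr (Sum.inr t)) = fun ω => f ω t)
    (hIndep : iIndepFun g μ)
    (hNid : ∀ a b, IdentDistrib (g (Sum.inl a)) (g (Sum.inl b)) μ μ)
    (hFid : ∀ a b, IdentDistrib (g (Sum.inr (Sum.inl a))) (g (Sum.inr (Sum.inl b))) μ μ)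
    (hfid : ∀ a b, IdentDistrib (g (Sum.inr (Sum.inr a))) (g (Sum.inr (Sum.inr b))) μ μ)
    (hmean : ∀ a, ∫ ω, g a ω ∂μ = 0)
    (hvar : ∀ a, ∫ ω, (g a ω) ^ 2 ∂μ = 1)
    (X : Ω → Matrix (Fin n) (Fin k) ℝ) (y : Ω → Fin n → ℝ)
    (hX : ∀ ω, X ω = V * (N ω * Pᵀ + η₁ • F ω))
    (hy : ∀ ω, y ω = V *ᵥ (N ω *ᵥ q + η₂ • f ω))
    -- averaged cross-covariance of `y` and `Xw`
    (C : (Fin k → ℝ) → ℝ)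
    (hC : ∀ w, C w = ((n : ℝ) ^ 2)⁻¹ * ∑ t : Fin n, ∑ s : Fin n,
      ((∫ ω, y ω t * (X ω *ᵥ w) s ∂μ) - (∫ ω, y ω t ∂μ) * ∫ ω, (X ω *ᵥ w) s ∂μ)) :
    (∀ w : Fin k → ℝ,
        C w = (((n : ℝ) ^ 2)⁻¹ * ∑ t : Fin n, ∑ s : Fin n, (V * V) t s) * ((P *ᵥ q) ⬝ᵥ w)) ∧
    ((0 < ∑ t : Fin n, ∑ s : Fin n, (V * V) t s) → P *ᵥ q ≠ 0 →
      ∀ w : Fin k → ℝ, ∑ j : Fin k, (w j) ^ 2 = 1 →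
        C w ≤ C (fun j => (P *ᵥ q) j / Real.sqrt (∑ j' : Fin k, ((P *ᵥ q) j') ^ 2))) := by
  have hnoise : ∀ ω, stackNoise (N ω) (F ω) (f ω) = fun a => g a ω := by
    intro ω
    ext (⟨t, i⟩ | ⟨t, j⟩ | t) <;> simp [stackNoise, hgN, hgF, hgf]
  -- measurability of each coordinate is read off its identical distribution with itself
  have hmeas : ∀ a, AEStronglyMeasurable (g a) μ := by
    rintro (a | a | a)
    exacts [(hNid a a).aemeasurable_fst.aestronglyMeasurable,
      (hFid a a).aemeasurable_fst.aestronglyMeasurable,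
      (hfid a a).aemeasurable_fst.aestronglyMeasurable]
  have hL2 : ∀ a, MemLp (g a) 2 μ := fun a => (memLp_two_iff_integrable_sq (hmeas a)).2
    (Integrable.of_integral_ne_zero (by simp [hvar]))
  have hresponse : ∀ ω t, y ω t = responseCoeff V q η₂ t ⬝ᵥ fun a => g a ω := fun ω t => by
    rw [hy, response_apply_eq_dotProduct V (N ω) (F ω), hnoise]
  have hpredictor : ∀ w ω s, (X ω *ᵥ w) s = predictorCoeff V P η₁ w s ⬝ᵥ fun a => g a ω :=
    fun w ω s => by rw [hX, predictor_mulVec_apply_eq_dotProduct V (N ω) (F ω) (f ω), hnoise]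
  have hcov : ∀ w t s, (∫ ω, y ω t * (X ω *ᵥ w) s ∂μ) - (∫ ω, y ω t ∂μ) * ∫ ω, (X ω *ᵥ w) s ∂μ
      = (V * V) t s * ((P *ᵥ q) ⬝ᵥ w) := by
    intro w t s
    simp only [hresponse, hpredictor, integral_dotProduct_mul_dotProduct
      (fun a b => (hL2 a).integrable_mul (hL2 b))
      (integral_mul_eq_ite_of_iIndepFun hIndep hmeas hmean hvar),
      integral_dotProduct_eq_zero (fun a => (hL2 a).integrable one_le_two) hmean,
      responseCoeff_dotProduct_predictorCoeff, hVsymm.eq, mul_zero, sub_zero]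
  have hfactor : ∀ w, C w
      = (((n : ℝ) ^ 2)⁻¹ * ∑ t : Fin n, ∑ s : Fin n, (V * V) t s) * ((P *ᵥ q) ⬝ᵥ w) := by
    intro w
    simp only [hC, hcov, ← Finset.sum_mul, mul_assoc]
  refine ⟨hfactor, fun hpos _ w hw => ?_⟩
  rw [hfactor, hfactor]
  exact mul_le_mul_of_nonneg_left (dotProduct_le_dotProduct_normalize _ w hw) (by positivity)

/-- Population partial least squares under the latent variable model: the averaged
cross-covariance factorizes as `n⁻² ∑_{t,s} Cov(y_t, X_sᵀ w) = (n⁻² ∑_{t,s} (V²)_{t,s})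
(Pq)ᵀ w`, so it is maximized over unit vectors by `w₁ = Pq/‖Pq‖` whenever
`∑_{t,s} (V²)_{t,s} > 0` and `Pq ≠ 0`; in particular `w₁` does not depend on `V²`. -/
theorem population_pls_first_direction
    (n k l : ℕ) (Ω : Type*) [MeasurableSpace Ω] (μ : Measure Ω) [IsProbabilityMeasure μ]
    (V : Matrix (Fin n) (Fin n) ℝ) (hVsymm : V.IsSymm) (hVpos : (V * V).PosDef)
    (P : Matrix (Fin k) (Fin l) ℝ) (q : Fin l → ℝ) (η₁ η₂ : ℝ) (hη₁ : 0 ≤ η₁) (hη₂ : 0 ≤ η₂)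
    (N : Ω → Matrix (Fin n) (Fin l) ℝ) (F : Ω → Matrix (Fin n) (Fin k) ℝ) (f : Ω → Fin n → ℝ)
    (g : (Fin n × Fin l) ⊕ (Fin n × Fin k) ⊕ Fin n → Ω → ℝ)
    (hgN : ∀ t i, g (Sum.inl (t, i)) = fun ω => N ω t i)
    (hgF : ∀ t i, g (Sum.inr (Sum.inl (t, i))) = fun ω => F ω t i)
    (hgf : ∀ t, g (Sum.inr (Sum.inr t)) = fun ω => f ω t)
    (hIndep : iIndepFun g μ)
    (hNid : ∀ a b, IdentDistrib (g (Sum.inl a)) (g (Sum.inl b)) μ μ)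
    (hFid : ∀ a b, IdentDistrib (g (Sum.inr (Sum.inl a))) (g (Sum.inr (Sum.inl b))) μ μ)
    (hfid : ∀ a b, IdentDistrib (g (Sum.inr (Sum.inr a))) (g (Sum.inr (Sum.inr b))) μ μ)
    (hmean : ∀ a, ∫ ω, g a ω ∂μ = 0)
    (hvar : ∀ a, ∫ ω, (g a ω) ^ 2 ∂μ = 1)
    (X : Ω → Matrix (Fin n) (Fin k) ℝ) (y : Ω → Fin n → ℝ)
    (hX : ∀ ω, X ω = V * (N ω * Pᵀ + η₁ • F ω))
    (hy : ∀ ω, y ω = V *ᵥ (N ω *ᵥ q + η₂ • f ω))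
    (hInty : ∀ t, Integrable (fun ω => y ω t) μ)
    (hIntX : ∀ s j, Integrable (fun ω => X ω s j) μ)
    (hIntyX : ∀ t s j, Integrable (fun ω => y ω t * X ω s j) μ)
    -- averaged cross-covariance of `y` and `Xw`
    (C : (Fin k → ℝ) → ℝ)
    (hC : ∀ w, C w = ((n : ℝ) ^ 2)⁻¹ * ∑ t : Fin n, ∑ s : Fin n,
      ((∫ ω, y ω t * (X ω *ᵥ w) s ∂μ) - (∫ ω, y ω t ∂μ) * ∫ ω, (X ω *ᵥ w) s ∂μ)) :
    (∀ w : Fin k → ℝ,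
        C w = (((n : ℝ) ^ 2)⁻¹ * ∑ t : Fin n, ∑ s : Fin n, (V * V) t s) * ((P *ᵥ q) ⬝ᵥ w)) ∧
    ((0 < ∑ t : Fin n, ∑ s : Fin n, (V * V) t s) → P *ᵥ q ≠ 0 →
      ∀ w : Fin k → ℝ, ∑ j : Fin k, (w j) ^ 2 = 1 →
        C w ≤ C (fun j => (P *ᵥ q) j / Real.sqrt (∑ j' : Fin k, ((P *ᵥ q) j') ^ 2))) :=
  population_pls_first_direction_general n k l Ω μ V hVsymm P q η₁ η₂ N F f g hgN hgF hgf hIndep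
    hNid hFid hfid hmean hvar X y hX hy C hC
end
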